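/- Let K be a field of characteristic zero and L : K be a finite field extension, and let N be a normal closure of L over K. Then L : K is radically (respectively quadratically) solvable if and only if N : K is radically (respectively quadratically) solvable. -/

import Mathlib

/-- A field extension `M : K` is a radical extension: there is a tower of intermediate
fields `K = K₁ ⊆ K₂ ⊆ … ⊆ K_t = M` with `K_{i+1} = K_i(x_i)` and `x_i ^ n_i ∈ K_i`
for some natural number `n_i > 0`. -/
def IsRadicalTower (K M : Type*) [Field K] [Field M] [Algebra K M] : Prop :=
  ∃ t : ℕ, ∃ c : Fin (t + 1) → IntermediateField K M,
    c 0 = ⊥ ∧ c (Fin.last t) = ⊤ ∧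
    ∀ i : Fin t, ∃ x : M, ∃ n : ℕ, 0 < n ∧ x ^ n ∈ c i.castSucc ∧
      c i.succ = c i.castSucc ⊔ IntermediateField.adjoin K {x}

/-- A quadratic extension: a radical extension with all `n_i = 2`. -/
def IsQuadraticTower (K M : Type*) [Field K] [Field M] [Algebra K M] : Prop :=
  ∃ t : ℕ, ∃ c : Fin (t + 1) → IntermediateField K M,
    c 0 = ⊥ ∧ c (Fin.last t) = ⊤ ∧
    ∀ i : Fin t, ∃ x : M, x ^ 2 ∈ c i.castSucc ∧
      c i.succ = c i.castSucc ⊔ IntermediateField.adjoin K {x}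

/-- `N : K` is radically solvable if `N` embeds (over `K`) into a radical extension
of `K`. -/
def RadicallySolvableExt (K : Type u) (N : Type v) [Field K] [Field N] [Algebra K N] :
    Prop :=
  ∃ (M : Type v) (_ : Field M) (_ : Algebra K M) (_ : N →ₐ[K] M), IsRadicalTower K M

/-- `N : K` is quadratically solvable if `N` embeds (over `K`) into a quadratic
extension of `K`. -/
def QuadraticallySolvableExt (K : Type u) (N : Type v) [Field K] [Field N] [Algebra K N] :
    Prop :=
  ∃ (M : Type v) (_ : Field M) (_ : Algebra K M) (_ : N →ₐ[K] M), IsQuadraticTower K M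

/-!
Transporting a tower along an embedding `σ` keeps each step radical, so every finite compositum
of conjugates of a radical (or quadratic) extension `M` is again one; in particular so is the
normal closure of `M`. If `L` embeds in `M`, then that normal closure is normal and receives `L`,
hence receives the normal closure `N` of `L`. Conversely `L ⊆ N`.
-/

open IntermediateField

theorem Relation.reflTransGen_iff_exists_fin_chain {α : Type*} {r : α → α → Prop}
    {a b : α} : ReflTransGen r a b ↔ ∃ t : ℕ, ∃ c : Fin (t + 1) → α,
      c 0 = a ∧ c (Fin.last t) = b ∧ ∀ i : Fin t, r (c i.castSucc) (c i.succ) := by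
  constructor
  · intro h
    induction h with
    | refl => exact ⟨0, fun _ => a, rfl, rfl, fun i => i.elim0⟩
    | @tail b' c' _ hstep ih =>
      obtain ⟨t, c, h0, hlast, hc⟩ := ih
      refine ⟨t + 1, Fin.snoc c c', ?_, Fin.snoc_last _ _, fun i => ?_⟩
      · exact (Fin.snoc_castSucc (i := 0) ..).trans h0
      · induction i using Fin.lastCases with
        | last =>
          rw [Fin.snoc_castSucc, hlast, Fin.succ_last, Fin.snoc_last]
          exact hstep
        | cast j =>
          rw [Fin.snoc_castSucc, Fin.succ_castSucc, Fin.snoc_castSucc]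
          exact hc j
  · rintro ⟨t, c, rfl, rfl, hc⟩
    have : ∀ i : Fin (t + 1), ReflTransGen r (c 0) (c i) := fun i => by
      induction i using Fin.induction with
      | zero => exact .refl
      | succ j ih => exact ih.tail (hc j)
    exact this _

section Towers

variable {P : ℕ → Prop} {K : Type*} [Field K]

/-- The exponents allowed are those satisfying `P`: `0 < n` for radical towers, `n = 2` for
quadratic ones. -/
def IsRadicalStep (P : ℕ → Prop) (K : Type*) [Field K] {Ω : Type*} [Field Ω] [Algebra K Ω]
    (F G : IntermediateField K Ω) : Prop :=
  ∃ x : Ω, ∃ n : ℕ, P n ∧ x ^ n ∈ F ∧ G = F ⊔ adjoin K {x}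

def HasRadicalTower (P : ℕ → Prop) (K M : Type*) [Field K] [Field M] [Algebra K M] : Prop :=
  Relation.ReflTransGen (IsRadicalStep P K) (⊥ : IntermediateField K M) ⊤

def SolvableByTower (P : ℕ → Prop) (K : Type u) (N : Type v) [Field K] [Field N]
    [Algebra K N] : Prop :=
  ∃ (M : Type v) (_ : Field M) (_ : Algebra K M) (_ : N →ₐ[K] M), HasRadicalTower P K M

theorem IsRadicalStep.finiteDimensional {Ω : Type*} [Field Ω] [Algebra K Ω]
    (hP : ∀ n, P n → 0 < n) {F G : IntermediateField K Ω} (h : IsRadicalStep P K F G)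
    [FiniteDimensional K F] : FiniteDimensional K G := by
  obtain ⟨x, n, hn, hxn, rfl⟩ := h
  have hx : IsIntegral K x :=
    .of_pow (hP n hn) (isIntegral_iff.mp (.of_finite K (⟨x ^ n, hxn⟩ : F)))
  have := adjoin.finiteDimensional hx
  exact finiteDimensional_sup _ _

theorem IsRadicalStep.sup_map {M Ω : Type*} [Field M] [Algebra K M] [Field Ω] [Algebra K Ω]
    (σ : M →ₐ[K] Ω) (F : IntermediateField K Ω) {A B : IntermediateField K M}
    (h : IsRadicalStep P K A B) : IsRadicalStep P K (F ⊔ A.map σ) (F ⊔ B.map σ) := by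
  obtain ⟨x, n, hn, hxn, rfl⟩ := h
  refine ⟨σ x, n, hn, le_sup_right (a := F) ⟨x ^ n, hxn, map_pow σ x n⟩, ?_⟩
  rw [IntermediateField.map_sup, adjoin_map, Set.image_singleton, sup_assoc]

variable {M : Type*} [Field M] [Algebra K M]

theorem HasRadicalTower.finiteDimensional (hP : ∀ n, P n → 0 < n) (h : HasRadicalTower P K M) :
    FiniteDimensional K M := by
  suffices ∀ F G : IntermediateField K M, Relation.ReflTransGen (IsRadicalStep P K) F G →
      FiniteDimensional K F → FiniteDimensional K G from
    have := this ⊥ ⊤ h inferInstance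
    topEquiv.toLinearEquiv.finiteDimensional
  intro F G hFG
  induction hFG with
  | refl => exact id
  | tail _ hstep ih => exact fun hF => have := ih hF; hstep.finiteDimensional hP

theorem HasRadicalTower.reflTransGen_sup_fieldRange {Ω : Type*} [Field Ω] [Algebra K Ω]
    (h : HasRadicalTower P K M) (σ : M →ₐ[K] Ω) (F : IntermediateField K Ω) :
    Relation.ReflTransGen (IsRadicalStep P K) F (F ⊔ σ.fieldRange) := by
  have : Relation.ReflTransGen (IsRadicalStep P K) (F ⊔ (⊥ : IntermediateField K M).map σ)
      (F ⊔ (⊤ : IntermediateField K M).map σ) :=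
    Relation.ReflTransGen.lift (fun A : IntermediateField K M => F ⊔ A.map σ)
      (fun _ _ hstep => hstep.sup_map σ F) _ _ h
  rwa [IntermediateField.map_bot, sup_bot_eq, ← AlgHom.fieldRange_eq_map] at this

theorem HasRadicalTower.of_algEquiv {M' : Type*} [Field M'] [Algebra K M'] (e : M ≃ₐ[K] M')
    (h : HasRadicalTower P K M) : HasRadicalTower P K M' := by
  have := h.reflTransGen_sup_fieldRange (e : M →ₐ[K] M') ⊥
  rwa [bot_sup_eq, AlgEquiv.fieldRange_eq_top] at this

theorem HasRadicalTower.of_iSup_fieldRange_eq_top {A : Type*} [Field A] [Algebra K A]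
    [FiniteDimensional K M] (h : HasRadicalTower P K M)
    (htop : ⨆ σ : M →ₐ[K] A, σ.fieldRange = ⊤) : HasRadicalTower P K A := by
  classical
  have : ∀ s : Finset (M →ₐ[K] A),
      Relation.ReflTransGen (IsRadicalStep P K) ⊥ (s.sup fun σ => σ.fieldRange) := by
    intro s
    induction s using Finset.induction with
    | empty => exact .refl
    | insert σ s _ ih =>
      rw [Finset.sup_insert, sup_comm]
      exact ih.trans (h.reflTransGen_sup_fieldRange σ _)
  rw [HasRadicalTower, ← htop, ← Finset.sup_univ_eq_iSup]
  exact this Finset.univ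

theorem hasRadicalTower_normalClosure {Ω : Type*} [Field Ω] [Algebra K Ω] [Normal K Ω]
    [FiniteDimensional K M] [Nonempty (M →ₐ[K] Ω)] (h : HasRadicalTower P K M) :
    HasRadicalTower P K (normalClosure K M Ω) := by
  have : Nonempty (M →ₐ[K] normalClosure K M Ω) :=
    ⟨(normalClosure.algHomEquiv K M Ω).symm (Classical.arbitrary _)⟩
  exact h.of_iSup_fieldRange_eq_top <|
    (normalClosure_eq_iSup_adjoin' K M (normalClosure K M Ω)).trans
      (isNormalClosure_normalClosure K M Ω).adjoin_rootSet

theorem HasRadicalTower.solvableByTower {N : Type*} [Field N] [Algebra K N]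
    (hP : ∀ n, P n → 0 < n) (h : HasRadicalTower P K M) (e : N →ₐ[K] M) :
    SolvableByTower P K N := by
  have := h.finiteDimensional hP
  let χ : M →ₐ[K] AlgebraicClosure N := IsAlgClosed.lift
  exact ⟨χ.fieldRange, inferInstance, inferInstance,
    (χ.comp e).codRestrict χ.fieldRange.toSubalgebra fun x => ⟨e x, rfl⟩,
    h.of_algEquiv (AlgEquiv.ofInjectiveField χ)⟩

theorem SolvableByTower.of_algHom {L N : Type*} [Field L] [Field N] [Algebra K L] [Algebra K N]
    (hP : ∀ n, P n → 0 < n) (h : SolvableByTower P K N) (f : L →ₐ[K] N) :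
    SolvableByTower P K L :=
  let ⟨_, _, _, g, hM⟩ := h
  hM.solvableByTower hP (g.comp f)

theorem SolvableByTower.of_isNormalClosure {L N : Type*} [Field L] [Field N] [Algebra K L]
    [Algebra K N] [IsNormalClosure K L N] (hP : ∀ n, P n → 0 < n) (h : SolvableByTower P K L) :
    SolvableByTower P K N := by
  obtain ⟨M, _, _, φ, hM⟩ := h
  have := hM.finiteDimensional hP
  let ι : M →ₐ[K] AlgebraicClosure K := IsAlgClosed.lift
  have : Nonempty (M →ₐ[K] AlgebraicClosure K) := ⟨ι⟩
  let ψ : L →ₐ[K] normalClosure K M (AlgebraicClosure K) :=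
    ((normalClosure.algHomEquiv K M (AlgebraicClosure K)).symm ι).comp φ
  have hsplits (x : L) :
      ((minpoly K x).map (algebraMap K (normalClosure K M (AlgebraicClosure K)))).Splits := by
    rw [← minpoly.algHom_eq ψ ψ.injective]
    exact Normal.splits inferInstance _
  exact (hasRadicalTower_normalClosure hM).solvableByTower hP (IsNormalClosure.lift hsplits)

theorem solvableByTower_iff_of_isNormalClosure {L N : Type*} [Field L] [Field N] [Algebra K L]
    [Algebra K N] [Algebra L N] [IsScalarTower K L N] [IsNormalClosure K L N]
    (hP : ∀ n, P n → 0 < n) : SolvableByTower P K L ↔ SolvableByTower P K N :=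
  ⟨.of_isNormalClosure hP, fun h => h.of_algHom hP (IsScalarTower.toAlgHom K L N)⟩

end Towers

theorem isNormalClosure_of_forall_normal_eq_top {K L N : Type*} [Field K] [Field L] [Field N]
    [Algebra K L] [Algebra K N] [Algebra L N] [IsScalarTower K L N] [Normal K N]
    (hmin : ∀ E : IntermediateField K N,
      (∀ x : L, algebraMap L N x ∈ E) → Normal K E → E = ⊤) :
    IsNormalClosure K L N := by
  have : Algebra.IsAlgebraic K L := .tower_bot K L N
  refine Algebra.IsAlgebraic.isNormalClosure_iff.mpr ⟨fun x => ?_, hmin _ (fun x => ?_) ?_⟩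
  · rw [← minpoly.algHom_eq (IsScalarTower.toAlgHom K L N) (algebraMap L N).injective]
    exact Normal.splits inferInstance _
  · exact (IsScalarTower.toAlgHom K L N).fieldRange_le_normalClosure ⟨x, rfl⟩
  · exact normalClosure.normal K L N

theorem isRadicalTower_iff_hasRadicalTower (K M : Type*) [Field K] [Field M] [Algebra K M] :
    IsRadicalTower K M ↔ HasRadicalTower (0 < ·) K M := by
  rw [HasRadicalTower, Relation.reflTransGen_iff_exists_fin_chain]
  rfl

theorem isQuadraticTower_iff_hasRadicalTower (K M : Type*) [Field K] [Field M] [Algebra K M] :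
    IsQuadraticTower K M ↔ HasRadicalTower (· = 2) K M := by
  rw [HasRadicalTower, Relation.reflTransGen_iff_exists_fin_chain]
  refine exists_congr fun t => exists_congr fun c => and_congr_right fun _ =>
    and_congr_right fun _ => forall_congr' fun i => ⟨?_, ?_⟩
  · rintro ⟨x, hx, hc⟩
    exact ⟨x, 2, rfl, hx, hc⟩
  · rintro ⟨x, _, rfl, hx, hc⟩
    exact ⟨x, hx, hc⟩

theorem radicallySolvableExt_iff (K : Type u) (N : Type v) [Field K] [Field N] [Algebra K N] :
    RadicallySolvableExt K N ↔ SolvableByTower (0 < ·) K N := by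
  simp only [RadicallySolvableExt, SolvableByTower, isRadicalTower_iff_hasRadicalTower]

theorem quadraticallySolvableExt_iff (K : Type u) (N : Type v) [Field K] [Field N]
    [Algebra K N] : QuadraticallySolvableExt K N ↔ SolvableByTower (· = 2) K N := by
  simp only [QuadraticallySolvableExt, SolvableByTower, isQuadraticTower_iff_hasRadicalTower]

theorem statement2_general (K L N : Type*) [Field K] [Field L] [Field N]
    [Algebra K L] [Algebra K N] [Algebra L N] [IsScalarTower K L N]
    [Normal K N]
    (hmin : ∀ E : IntermediateField K N,
      (∀ x : L, algebraMap L N x ∈ E) → Normal K ↥E → E = ⊤) :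
    (RadicallySolvableExt K L ↔ RadicallySolvableExt K N) ∧
    (QuadraticallySolvableExt K L ↔ QuadraticallySolvableExt K N) := by
  have := isNormalClosure_of_forall_normal_eq_top hmin
  simp only [radicallySolvableExt_iff, quadraticallySolvableExt_iff]
  exact ⟨solvableByTower_iff_of_isNormalClosure fun _ h => h,
    solvableByTower_iff_of_isNormalClosure fun _ h => h ▸ two_pos⟩

/-- Lemma: in characteristic zero, a finite extension `L : K` is radically
(respectively quadratically) solvable iff its normal closure `N` over `K` is. -/
theorem statement2 (K L N : Type*) [Field K] [Field L] [Field N]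
    [Algebra K L] [Algebra K N] [Algebra L N] [IsScalarTower K L N]
    [CharZero K] [FiniteDimensional K L] [Normal K N]
    (hmin : ∀ E : IntermediateField K N,
      (∀ x : L, algebraMap L N x ∈ E) → Normal K ↥E → E = ⊤) :
    (RadicallySolvableExt K L ↔ RadicallySolvableExt K N) ∧
    (QuadraticallySolvableExt K L ↔ QuadraticallySolvableExt K N) :=
  statement2_general K L N hmin
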